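/- Let N ∈ ℕ, let L : ℂ^N → ℂ^N be a Hermitian (self-adjoint) linear map, β ∈ ℝ, C₀ > 0, ρ(ψ) = √(Σ_j |ψ_j|⁴ + C₀). Let ψ : ℝ → ℂ^N and q : ℝ → ℝ be differentiable, and define u : ℝ → ℂ^N by u(t) = exp(i t L) (ψ t). Then (ψ, q) satisfies the SAV system ψ'(t) = −i • (L (ψ t) + (β q t / ρ(ψ t)) • (|ψ t|²(ψ t))), q'(t) = (2 / ρ(ψ t)) * Re⟨ψ'(t), |ψ t|²(ψ t)⟩, for all t, if and only if (u, q) satisfies the Lawson-transformed system u'(t) = −i • exp(i t L) ((β q t / ρ(v t)) • (|v t|²(v t))) and q'(t) = (2 / ρ(v t)) * Re⟨−i • (L (v t)), |v t|²(v t)⟩, where v t := exp(−i t L) (u t) = ψ t. -/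

import Mathlib

open Finset Complex

/-- The componentwise cubic nonlinearity `|ψ|²ψ`. -/
noncomputable def nlVec {N : ℕ} (ψ : EuclideanSpace ℂ (Fin N)) : EuclideanSpace ℂ (Fin N) :=
  WithLp.toLp 2 (fun j => (‖ψ j‖ : ℂ) ^ 2 * ψ j)

/-- The inner product `⟨x, y⟩ = ∑ j, x j * conj (y j)` of the paper. -/
noncomputable def pInner {N : ℕ} (x y : EuclideanSpace ℂ (Fin N)) : ℂ :=
  ∑ j, x j * (starRingEnd ℂ) (y j)

/-- The SAV denominator `ρ(ψ) = √(∑ j |ψ j|⁴ + C₀)`. -/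
noncomputable def savRho {N : ℕ} (C₀ : ℝ) (ψ : EuclideanSpace ℂ (Fin N)) : ℝ :=
  Real.sqrt ((∑ j, ‖ψ j‖ ^ 4) + C₀)

/-!
Since `exp(-itL)` inverts `exp(itL)`, `v = ψ`, and the product rule gives
`u' = exp(itL) (iLψ + ψ')`; cancelling the injective `exp(itL)` turns the `ψ`-equation into the
`u`-equation. Along solutions, the nonlinear part of `ψ'` is `i` times a real multiple of
`|ψ|²ψ`, so it does not contribute to `Re ⟨ψ', |ψ|²ψ⟩`, and the two `q`-equations agree.
-/

open InnerProductSpace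

section Exponential

variable {E : Type*} [NormedAddCommGroup E] [NormedSpace ℂ E] [CompleteSpace E]

theorem exp_neg_apply_exp_apply (A : E →L[ℂ] E) (x : E) :
    NormedSpace.exp (-A) (NormedSpace.exp A x) = x := by
  -- `exp_add_of_commute` is stated for `ℚ`-algebras, from which `NormedSpace.exp` is built.
  let : NormedAlgebra ℚ (E →L[ℂ] E) := NormedAlgebra.restrictScalars ℚ ℂ _
  change (NormedSpace.exp (-A) * NormedSpace.exp A) x = x
  rw [← NormedSpace.exp_add_of_commute (Commute.refl A).neg_left, neg_add_cancel,
    NormedSpace.exp_zero, one_apply_eq_self]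

theorem exp_apply_injective (A : E →L[ℂ] E) : Function.Injective ⇑(NormedSpace.exp A) :=
  Function.LeftInverse.injective (exp_neg_apply_exp_apply A)

theorem hasDerivAt_exp_smul_apply (A : E →L[ℂ] E) {ψ : ℝ → E} {ψ' : E} {t : ℝ}
    (hψ : HasDerivAt ψ ψ' t) :
    HasDerivAt (fun s : ℝ => NormedSpace.exp (s • A) (ψ s))
      (NormedSpace.exp (t • A) (A (ψ t) + ψ')) t := by
  have hexp : HasDerivAt (fun s : ℝ => (NormedSpace.exp (s • A)).restrictScalars ℝ)
      ((NormedSpace.exp (t • A) * A).restrictScalars ℝ) t :=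
    (ContinuousLinearMap.restrictScalarsL ℂ E E ℝ ℝ).hasFDerivAt.comp_hasDerivAt t
      (hasDerivAt_exp_smul_const A t)
  exact (hexp.clm_apply hψ).congr_deriv (map_add (NormedSpace.exp (t • A)) _ _).symm

end Exponential

theorem re_inner_neg_I_smul_add_ofReal_smul_self {F : Type*} [NormedAddCommGroup F]
    [InnerProductSpace ℂ F] (x y : F) (c : ℝ) :
    (⟪y, (-I) • (x + (c : ℂ) • y)⟫_ℂ).re = (⟪y, (-I) • x⟫_ℂ).re := by
  rw [smul_add, inner_add_right, add_re, add_eq_left, smul_smul, inner_smul_right,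
    inner_self_eq_norm_sq_to_K]
  simp [← ofReal_pow]

theorem pInner_eq_inner {N : ℕ} (x y : EuclideanSpace ℂ (Fin N)) :
    pInner x y = ⟪y, x⟫_ℂ := by
  simp [pInner, PiLp.inner_apply]

theorem Lawson_transform_equivalence_general {N : ℕ}
    (L : EuclideanSpace ℂ (Fin N) →L[ℂ] EuclideanSpace ℂ (Fin N))
    (β : ℝ) (C₀ : ℝ)
    (ψ : ℝ → EuclideanSpace ℂ (Fin N)) (q : ℝ → ℝ)
    (hψ : Differentiable ℝ ψ)
    (u v : ℝ → EuclideanSpace ℂ (Fin N))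
    (hu : ∀ t, u t = NormedSpace.exp ((Complex.I * (t : ℂ)) • L) (ψ t))
    (hv : ∀ t, v t = NormedSpace.exp (((-Complex.I) * (t : ℂ)) • L) (u t)) :
    ((∀ t, deriv ψ t = (-Complex.I) •
          (L (ψ t) + ((β * q t / savRho C₀ (ψ t) : ℝ) : ℂ) • nlVec (ψ t))) ∧
      (∀ t, deriv q t =
          (2 / savRho C₀ (ψ t)) * (pInner (deriv ψ t) (nlVec (ψ t))).re))
    ↔
    ((∀ t, deriv u t = (-Complex.I) •
          NormedSpace.exp ((Complex.I * (t : ℂ)) • L)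
            (((β * q t / savRho C₀ (v t) : ℝ) : ℂ) • nlVec (v t))) ∧
      (∀ t, deriv q t =
          (2 / savRho C₀ (v t)) *
            (pInner ((-Complex.I) • L (v t)) (nlVec (v t))).re)) := by
  have hsmul (t : ℝ) : (I * t) • L = t • (I • L) := by
    rw [mul_comm, ← smul_smul]
    rfl
  have hsmul_neg (t : ℝ) : (-I * t) • L = -(t • (I • L)) := by
    rw [← hsmul]
    module
  obtain rfl : ψ = v := funext fun t => by
    rw [hv, hu, hsmul_neg, hsmul, exp_neg_apply_exp_apply]
  have hderiv_u (t : ℝ) :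
      deriv u t = NormedSpace.exp (t • (I • L)) (I • L (ψ t) + deriv ψ t) := by
    have hu' : u = fun s : ℝ => NormedSpace.exp (s • (I • L)) (ψ s) :=
      funext fun s => by rw [hu, hsmul]
    rw [hu', (hasDerivAt_exp_smul_apply _ (hψ t).hasDerivAt).deriv, smul_apply]
  have hψ_iff_hu (t : ℝ) (w : EuclideanSpace ℂ (Fin N)) :
      deriv ψ t = (-I) • (L (ψ t) + w) ↔
        deriv u t = (-I) • NormedSpace.exp ((I * t) • L) w := by
    rw [hderiv_u, hsmul, ← map_smul (NormedSpace.exp (t • (I • L))) (-I) w,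
      (exp_apply_injective _).eq_iff, smul_add, neg_smul, eq_neg_add_iff_add_eq]
  simp only [← forall_and]
  refine forall_congr' fun t => ?_
  rw [← hψ_iff_hu]
  refine and_congr_right fun hψt => ?_
  rw [hψt, pInner_eq_inner, pInner_eq_inner, re_inner_neg_I_smul_add_ofReal_smul_self]

/-- Lawson change of variables `u(t) = exp(i t L) ψ(t)`: `(ψ, q)` solves the SAV
system (7) if and only if `(u, q)` solves the Lawson-transformed system (9). -/
theorem Lawson_transform_equivalence {N : ℕ}
    (L : EuclideanSpace ℂ (Fin N) →L[ℂ] EuclideanSpace ℂ (Fin N))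
    (hL : ∀ x y, pInner (L x) y = pInner x (L y))
    (β : ℝ) (C₀ : ℝ) (hC₀ : 0 < C₀)
    (ψ : ℝ → EuclideanSpace ℂ (Fin N)) (q : ℝ → ℝ)
    (hψ : Differentiable ℝ ψ) (hq : Differentiable ℝ q)
    (u v : ℝ → EuclideanSpace ℂ (Fin N))
    (hu : ∀ t, u t = NormedSpace.exp ((Complex.I * (t : ℂ)) • L) (ψ t))
    (hv : ∀ t, v t = NormedSpace.exp (((-Complex.I) * (t : ℂ)) • L) (u t)) :
    ((∀ t, deriv ψ t = (-Complex.I) •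
          (L (ψ t) + ((β * q t / savRho C₀ (ψ t) : ℝ) : ℂ) • nlVec (ψ t))) ∧
      (∀ t, deriv q t =
          (2 / savRho C₀ (ψ t)) * (pInner (deriv ψ t) (nlVec (ψ t))).re))
    ↔
    ((∀ t, deriv u t = (-Complex.I) •
          NormedSpace.exp ((Complex.I * (t : ℂ)) • L)
            (((β * q t / savRho C₀ (v t) : ℝ) : ℂ) • nlVec (v t))) ∧
      (∀ t, deriv q t =
          (2 / savRho C₀ (v t)) *
            (pInner ((-Complex.I) • L (v t)) (nlVec (v t))).re)) :=
  Lawson_transform_equivalence_general L β C₀ ψ q hψ u v hu hv
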